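/- Let φ be a quaternion window function with ‖φ‖₂ = 1 and f ∈ L²(ℝ², ℍ) with ‖f‖₂ = 1. If Σ ⊂ ℝ² × ℝ² is measurable and 0 ≤ ε < 1 satisfy ∬_Σ |G_φ f(ω,b)|² dω db ≥ 1 − ε, then the Lebesgue measure of Σ satisfies m(Σ) ≥ 1 − ε. -/

import Mathlib

open MeasureTheory ENNReal

noncomputable def Qi : Quaternion ℝ := ⟨0,1,0,0⟩
noncomputable def Qj : Quaternion ℝ := ⟨0,0,1,0⟩

/-- quaternion exponential `exp (t • u) = cos t + (sin t) • u` for an imaginary unit `u` -/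
noncomputable def qexp (u : Quaternion ℝ) (t : ℝ) : Quaternion ℝ :=
  ((Real.cos t : ℝ) : Quaternion ℝ) + (Real.sin t) • u

/-- the two-sided Gabor quaternion Fourier transform -/
noncomputable def GQFT (φ f : ℝ × ℝ → Quaternion ℝ) (ω b : ℝ × ℝ) : Quaternion ℝ :=
  ∫ x : ℝ × ℝ, qexp Qi (-(2 * Real.pi * x.1 * ω.1)) * f x * star (φ (x - b)) *
    qexp Qj (-(2 * Real.pi * x.2 * ω.2))

/-! Since the quaternion exponentials have modulus one, Cauchy–Schwarz and the translation
invariance of `‖φ‖₂` give `‖G_φ f‖_∞ ≤ ‖f‖₂ ‖φ‖₂ = 1`. Hence `|G_φ f|² ≤ 1` pointwise, and the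
energy `1 - ε` captured on `Σ` is at most the measure of `Σ`. -/

open Quaternion

lemma normSq_qexp {u : Quaternion ℝ} (hre : u.re = 0) (hu : normSq u = 1) (t : ℝ) :
    normSq (qexp u t) = 1 := by
  rw [normSq_def'] at hu ⊢
  simp only [qexp, re_add, re_coe, re_smul, imI_add, imI_coe, imI_smul, imJ_add, imJ_coe,
    imJ_smul, imK_add, imK_coe, imK_smul, hre, smul_eq_mul] at hu ⊢
  linear_combination (Real.sin t) ^ 2 * hu + Real.cos_sq_add_sin_sq t

lemma norm_qexp {u : Quaternion ℝ} (hre : u.re = 0) (hu : normSq u = 1) (t : ℝ) :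
    ‖qexp u t‖ = 1 := by
  rw [← pow_eq_one_iff_of_nonneg (norm_nonneg _) two_ne_zero, sq, ← normSq_eq_norm_mul_self,
    normSq_qexp hre hu]

lemma norm_qexp_Qi (t : ℝ) : ‖qexp Qi t‖ = 1 := norm_qexp rfl (by rw [normSq_def']; simp [Qi]) t

lemma norm_qexp_Qj (t : ℝ) : ‖qexp Qj t‖ = 1 := norm_qexp rfl (by rw [normSq_def']; simp [Qj]) t

lemma ofReal_setIntegral_norm_sq_le_measure {α E : Type*} [MeasurableSpace α]
    [NormedAddCommGroup E] {μ : Measure α} {g : α → E} (hg : ∀ z, ‖g z‖ₑ ≤ 1) (s : Set α) :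
    ENNReal.ofReal (∫ z in s, ‖g z‖ ^ 2 ∂μ) ≤ μ s :=
  -- passing through `‖·‖ₑ` avoids integrability: a non-integrable integrand has integral `0`
  calc ENNReal.ofReal (∫ z in s, ‖g z‖ ^ 2 ∂μ)
      ≤ ‖∫ z in s, ‖g z‖ ^ 2 ∂μ‖ₑ := Real.ofReal_le_enorm _
    _ ≤ ∫⁻ z in s, ‖g z‖ₑ ^ 2 ∂μ := by
      refine (enorm_integral_le_lintegral_enorm _).trans_eq ?_
      simp only [enorm_pow, enorm_norm]
    _ ≤ ∫⁻ _ in s, 1 ∂μ := lintegral_mono fun z => pow_le_one₀ bot_le (hg z)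
    _ = μ s := by rw [setLIntegral_const, one_mul]

lemma enorm_GQFT_le {φ f : ℝ × ℝ → Quaternion ℝ} (hφ : AEStronglyMeasurable φ volume)
    (hf : AEStronglyMeasurable f volume) (ω b : ℝ × ℝ) :
    ‖GQFT φ f ω b‖ₑ ≤ eLpNorm f 2 volume * eLpNorm φ 2 volume := by
  have hφb : eLpNorm (fun x => φ (x - b)) 2 volume = eLpNorm φ 2 volume :=
    eLpNorm_comp_measurePreserving hφ (measurePreserving_sub_right volume b)
  calc ‖GQFT φ f ω b‖ₑ
      ≤ eLpNorm (fun x => f x * star (φ (x - b))) 1 volume := by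
        rw [eLpNorm_one_eq_lintegral_enorm]
        refine (enorm_integral_le_lintegral_enorm _).trans_eq (lintegral_congr fun x => ?_)
        simp only [← ofReal_norm, norm_mul, norm_star, norm_qexp_Qi, norm_qexp_Qj,
          one_mul, mul_one]
    _ ≤ 1 * eLpNorm f 2 volume * eLpNorm (fun x => φ (x - b)) 2 volume :=
        eLpNorm_le_eLpNorm_mul_eLpNorm_of_nnnorm hf
          (hφ.comp_measurePreserving (measurePreserving_sub_right volume b)) (· * star ·) 1
          (.of_forall fun x => by simp [nnnorm_mul])
    _ = eLpNorm f 2 volume * eLpNorm φ 2 volume := by rw [hφb, one_mul]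

theorem gqft_concentration_measure_general (φ f : ℝ × ℝ → Quaternion ℝ)
    (hφ : MemLp φ 2 volume) (hf : MemLp f 2 volume)
    (hφn : eLpNorm φ 2 volume = 1) (hfn : eLpNorm f 2 volume = 1)
    (E : Set ((ℝ × ℝ) × (ℝ × ℝ)))
    (ε : ℝ)
    (hconc : 1 - ε ≤ ∫ z in E, ‖GQFT φ f z.1 z.2‖ ^ 2) :
    ENNReal.ofReal (1 - ε) ≤ volume E := by
  have hbound (z : (ℝ × ℝ) × (ℝ × ℝ)) : ‖GQFT φ f z.1 z.2‖ₑ ≤ 1 := by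
    simpa [hfn, hφn] using enorm_GQFT_le hφ.1 hf.1 z.1 z.2
  exact (ENNReal.ofReal_le_ofReal hconc).trans (ofReal_setIntegral_norm_sq_le_measure hbound E)

/-- Concentration of the GQFT of a normalized pair on a set Σ forces m(Σ) ≥ 1 - ε. -/
theorem gqft_concentration_measure (φ f : ℝ × ℝ → Quaternion ℝ)
    (hφ : MemLp φ 2 volume) (hf : MemLp f 2 volume)
    (hφn : eLpNorm φ 2 volume = 1) (hfn : eLpNorm f 2 volume = 1)
    (E : Set ((ℝ × ℝ) × (ℝ × ℝ))) (hE : MeasurableSet E)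
    (ε : ℝ) (hε0 : 0 ≤ ε) (hε1 : ε < 1)
    (hconc : 1 - ε ≤ ∫ z in E, ‖GQFT φ f z.1 z.2‖ ^ 2) :
    ENNReal.ofReal (1 - ε) ≤ volume E :=
  gqft_concentration_measure_general φ f hφ hf hφn hfn E ε hconc
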